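/- arXiv:2505.08911 — 3 statements merged into one kernel-verified Lean document; each statement's English description precedes it below -/
import Mathlib

section
/- Suppose ξ, ζ ∈ M satisfy Q(ξ) = 0, Q(ζ) = 0 and B(ζ, ξ) = 1, and suppose that for r ∈ R, r·ι(ξ) = 0 in C implies r = 0. Then for every v ∈ M, left multiplication by ι(v) preserves the left-multiplication image ι(ξ)·C (i.e. ι(v)·ι(ξ)·c ∈ ι(ξ)·C for all c ∈ C) if and only if B(v, ξ) = 0. -/
/-!
For isotropic `ξ` the sandwich `ι ξ * ι w * ι ξ` is the scalar multiple `polar Q ξ w • ι ξ`.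
If `ι v` preserves `ι ξ * C`, write `ι v * (ι ξ * ι ζ) = ι ξ * c'`; multiplying by `ι ξ` on the left
and on the right kills the right-hand side (`ι ξ ^ 2 = 0`) and turns the left-hand side into
`(polar Q ξ v * polar Q ξ ζ) • ι ξ`, so `polar Q ξ v = 0` because `polar Q ξ ζ = 2` is a unit.
Conversely, if `ι v` anticommutes with `ι ξ`, then `ι v * (ι ξ * c) = ι ξ * -(ι v * c)`.
-/

namespace QuadraticMap

theorem polar_eq_two_mul {R M : Type*} [CommRing R] [AddCommGroup M] [Module R M]
    {B : LinearMap.BilinForm R M} (hB : ∀ x y : M, B x y = B y x)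
    {Q : QuadraticForm R M} (hQ : ∀ x : M, Q x = B x x) (x y : M) :
    polar Q x y = 2 * B x y := by
  simp only [polar, hQ, map_add, LinearMap.add_apply, hB y x]
  ring

end QuadraticMap

namespace CliffordAlgebra

open QuadraticMap

variable {R M : Type*} [CommRing R] [AddCommGroup M] [Module R M] {Q : QuadraticForm R M}
  {ξ : M}

theorem ι_mul_ι_mul_ι_of_isotropic (hξ : Q ξ = 0) (w : M) :
    ι Q ξ * ι Q w * ι Q ξ = polar Q ξ w • ι Q ξ := by
  rw [ι_mul_ι_mul_ι, hξ, zero_smul, sub_zero, map_smul]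

theorem polar_mul_polar_smul_ι_eq_zero (hξ : Q ξ = 0) {v ζ : M} {c : CliffordAlgebra Q}
    (h : ι Q v * (ι Q ξ * ι Q ζ) = ι Q ξ * c) :
    (polar Q ξ v * polar Q ξ ζ) • ι Q ξ = 0 :=
  calc (polar Q ξ v * polar Q ξ ζ) • ι Q ξ
      = ι Q ξ * ι Q v * ι Q ξ * ι Q ζ * ι Q ξ := by
        rw [ι_mul_ι_mul_ι_of_isotropic hξ v, smul_mul_assoc, smul_mul_assoc,
          ι_mul_ι_mul_ι_of_isotropic hξ ζ, mul_smul]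
    _ = ι Q ξ * ι Q ξ * c * ι Q ξ := by
        rw [mul_assoc (ι Q ξ * ι Q v), mul_assoc (ι Q ξ), h]
        simp only [mul_assoc]
    _ = 0 := by rw [ι_sq_scalar, hξ, map_zero, zero_mul, zero_mul]

theorem forall_exists_ι_mul_ι_mul_eq_ι_mul_iff (hξ : Q ξ = 0) {ζ : M}
    (hζ : IsUnit (polar Q ξ ζ)) (hreg : ∀ r : R, r • ι Q ξ = 0 → r = 0) (v : M) :
    (∀ c : CliffordAlgebra Q, ∃ c' : CliffordAlgebra Q, ι Q v * (ι Q ξ * c) = ι Q ξ * c') ↔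
      polar Q ξ v = 0 := by
  constructor
  · intro h
    obtain ⟨c', hc'⟩ := h (ι Q ζ)
    exact hζ.mul_left_eq_zero.mp (hreg _ (polar_mul_polar_smul_ι_eq_zero hξ hc'))
  · intro hv c
    have hortho : Q.IsOrtho v ξ :=
      isOrtho_polarBilin.mp (by rwa [polarBilin_apply_apply, polar_comm])
    exact ⟨-(ι Q v * c), by rw [mul_neg, ι_mul_ι_mul_of_isOrtho c hortho]⟩

end CliffordAlgebra

theorem statement14_general {R M : Type*} [CommRing R] [Invertible (2 : R)]
    [AddCommGroup M] [Module R M]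
    (B : LinearMap.BilinForm R M) (hB : ∀ x y : M, B x y = B y x)
    (Q : QuadraticForm R M) (hQ : ∀ x : M, Q x = B x x)
    (ξ ζ : M) (hξ : Q ξ = 0) (hpair : B ζ ξ = 1)
    (hreg : ∀ r : R, r • (CliffordAlgebra.ι Q ξ) = 0 → r = 0)
    (v : M) :
    (∀ c : CliffordAlgebra Q, ∃ c' : CliffordAlgebra Q,
        CliffordAlgebra.ι Q v * (CliffordAlgebra.ι Q ξ * c) = CliffordAlgebra.ι Q ξ * c')
      ↔ B v ξ = 0 := by
  have h2 : IsUnit (2 : R) := isUnit_of_invertible 2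
  have hpolar := QuadraticMap.polar_eq_two_mul hB hQ
  have hζ : IsUnit (QuadraticMap.polar Q ξ ζ) := by rwa [hpolar, hB, hpair, mul_one]
  rw [CliffordAlgebra.forall_exists_ι_mul_ι_mul_eq_ι_mul_iff hξ hζ hreg, hpolar, hB,
    h2.mul_right_eq_zero]

/-- in the Clifford algebra of `Q`, for `ξ` isotropic with a hyperbolic partner `ζ`,
left multiplication by `ι(v)` preserves `ι(ξ)·C` iff `B(v, ξ) = 0`. -/
theorem statement14 {R M : Type*} [CommRing R] [Invertible (2 : R)]
    [AddCommGroup M] [Module R M]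
    (B : LinearMap.BilinForm R M) (hB : ∀ x y : M, B x y = B y x)
    (Q : QuadraticForm R M) (hQ : ∀ x : M, Q x = B x x)
    (ξ ζ : M) (hξ : Q ξ = 0) (hζ : Q ζ = 0) (hpair : B ζ ξ = 1)
    (hreg : ∀ r : R, r • (CliffordAlgebra.ι Q ξ) = 0 → r = 0)
    (v : M) :
    (∀ c : CliffordAlgebra Q, ∃ c' : CliffordAlgebra Q,
        CliffordAlgebra.ι Q v * (CliffordAlgebra.ι Q ξ * c) = CliffordAlgebra.ι Q ξ * c')
      ↔ B v ξ = 0 :=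
  statement14_general B hB Q hQ ξ ζ hξ hpair hreg v
end

section
/- Let s ∈ {0, …, n} and let y = (a₁, …, aₙ) ∈ (½ℤ)ⁿ be such that exactly s of the coordinates aᵢ lie in ½ + ℤ. Let x⁽ˢ⁾ = (½, …, ½, 0, …, 0) (with s coordinates equal to ½). If the O-module (L(y) + L(x⁽ˢ⁾))/L(x⁽ˢ⁾) has length 1, then either y = x⁽ˢ⁾ + εᵢ or y = x⁽ˢ⁾ − εᵢ for some 1 ≤ i ≤ n, or y = x⁽ˢ⁾ ± ½εⱼ ± ½εᵢ for some 1 ≤ j ≤ s and s + 1 ≤ i ≤ n (any combination of signs), where ε₁, …, εₙ is the standard basis of ℝⁿ. -/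
/-!
`L(y)` is the diagonal lattice with exponents `⌈aᵢ⌉` and `⌈-aᵢ⌉` in the basis `e₁, …, fₙ`.
Diagonal lattices are ordered by reverse pointwise comparison of their exponent vectors, and the
sum of two of them has the pointwise minimum as exponent vector. A length-one quotient is a
covering relation, so the exponents of `L(y) + L(x⁽ˢ⁾)` are those of `L(x⁽ˢ⁾)` lowered by one in
a single coordinate. Writing `y = m / 2`, this leaves only a few values for each `mᵢ`, and since
`m` and `2x⁽ˢ⁾` both have exactly `s` odd coordinates, the odd coordinates of `m` beyond the
first `s` are as many as its even ones among the first `s`, of which there is at most one.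
-/

open scoped Classical

noncomputable section

namespace VertexLatticePosition

variable {O K V : Type*} [CommRing O] [Field K] [Algebra O K]
  [AddCommGroup V] [Module K V] [Module O V] [IsScalarTower O K V]

/-- The length of the `O`-module `N'/N`. -/
def relLength (N N' : Submodule O V) : WithBot ℕ∞ :=
  Order.krullDim (Submodule O (↥N' ⧸ (N.comap N'.subtype)))

/-- The lattice `L(y) = Span_O(π^⌈a₁⌉e₁, …, π^⌈aₙ⌉eₙ, π^⌈−a₁⌉f₁, …, π^⌈−aₙ⌉fₙ)` attached to
`y = (a₁, …, aₙ)`, where `eᵢ = b (inl i)` and `fᵢ = b (inr i)`. -/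
def latticeOf (π : O) {n : ℕ} (b : Module.Basis (Fin n ⊕ Fin n) K V) (y : Fin n → ℚ) :
    Submodule O V :=
  Submodule.span O
    ((Set.range fun i : Fin n => ((algebraMap O K π) ^ (⌈y i⌉ : ℤ)) • b (Sum.inl i)) ∪
     (Set.range fun i : Fin n => ((algebraMap O K π) ^ (⌈-(y i)⌉ : ℤ)) • b (Sum.inr i)))

theorem relLength_eq_one_iff_covBy {R M : Type*} [CommRing R] [AddCommGroup M] [Module R M]
    {N N' : Submodule R M} (h : N ≤ N') : relLength N N' = 1 ↔ N ⋖ N' := by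
  rw [relLength, Order.krullDim_eq_one_iff_of_boundedOrder, ← isSimpleModule_iff,
    covBy_iff_quot_is_simple h]

section DiagonalLattice

variable {ι : Type*} (π : O) (b : Module.Basis ι K V)

def diagLattice (e : ι → ℤ) : Submodule O V :=
  Submodule.span O (Set.range fun j => (algebraMap O K π ^ e j) • b j)

variable {π b}

theorem zpow_smul_mem_diagLattice [IsFractionRing O K] (hπ : π ≠ 0) {e : ι → ℤ} {j : ι} {m : ℤ}
    (h : e j ≤ m) : (algebraMap O K π ^ m) • b j ∈ diagLattice π b e := by
  have hπK : algebraMap O K π ≠ 0 := (map_ne_zero_iff _ (IsFractionRing.injective O K)).2 hπ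
  have hm : m = e j + ((m - e j).toNat : ℕ) := by omega
  rw [hm, zpow_add₀ hπK, zpow_natCast, mul_comm, mul_smul, ← map_pow, algebraMap_smul]
  exact Submodule.smul_mem _ _ (Submodule.subset_span ⟨j, rfl⟩)

theorem repr_mem_span_of_mem_diagLattice {e : ι → ℤ} {v : V} (hv : v ∈ diagLattice π b e)
    (j : ι) : b.repr v j ∈ Submodule.span O {algebraMap O K π ^ e j} := by
  have hmap : (diagLattice π b e).map ((b.coord j).restrictScalars O) ≤
      Submodule.span O {algebraMap O K π ^ e j} := by
    rw [diagLattice, Submodule.map_span_le]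
    rintro _ ⟨i, rfl⟩
    obtain rfl | hij := eq_or_ne i j
    · simp [Submodule.mem_span_singleton_self]
    · simp [hij]
  exact hmap ⟨v, hv, rfl⟩

theorem le_of_algebraMap_mul_zpow_eq_zpow [IsFractionRing O K] (hπ : π ≠ 0) (hπu : ¬IsUnit π)
    {o : O} {a c : ℤ} (h : algebraMap O K o * algebraMap O K π ^ a = algebraMap O K π ^ c) :
    a ≤ c := by
  have hπK : algebraMap O K π ≠ 0 := (map_ne_zero_iff _ (IsFractionRing.injective O K)).2 hπ
  by_contra! hca
  have ha : a = c + ((a - c).toNat : ℕ) := by omega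
  rw [ha, zpow_add₀ hπK, zpow_natCast, ← mul_assoc, mul_comm _ (algebraMap O K π ^ c),
    mul_assoc, mul_eq_left₀ (zpow_ne_zero c hπK), ← map_pow, ← map_mul, map_eq_one_iff _
    (IsFractionRing.injective O K)] at h
  exact hπu ((isUnit_pow_iff (by omega)).1 (IsUnit.of_mul_eq_one_right _ h))

theorem diagLattice_le_diagLattice_iff [IsFractionRing O K] (hπ : π ≠ 0) (hπu : ¬IsUnit π)
    {e e' : ι → ℤ} : diagLattice π b e ≤ diagLattice π b e' ↔ e' ≤ e := by
  refine ⟨fun h j => ?_, fun h => Submodule.span_le.2 ?_⟩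
  · obtain ⟨o, ho⟩ := Submodule.mem_span_singleton.1
      (repr_mem_span_of_mem_diagLattice (h (Submodule.subset_span ⟨j, rfl⟩)) j)
    simp only [map_smul, Module.Basis.repr_self, Finsupp.smul_apply, Finsupp.single_eq_same,
      smul_eq_mul, mul_one, algebra_compatible_smul K o] at ho
    exact le_of_algebraMap_mul_zpow_eq_zpow hπ hπu ho
  · rintro _ ⟨j, rfl⟩
    exact zpow_smul_mem_diagLattice hπ (h j)

theorem diagLattice_sup [IsFractionRing O K] (hπ : π ≠ 0) (hπu : ¬IsUnit π) (e e' : ι → ℤ) :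
    diagLattice π b e ⊔ diagLattice π b e' = diagLattice π b (e ⊓ e') := by
  refine le_antisymm (sup_le ?_ ?_) (Submodule.span_le.2 ?_)
  · exact (diagLattice_le_diagLattice_iff hπ hπu).2 inf_le_left
  · exact (diagLattice_le_diagLattice_iff hπ hπu).2 inf_le_right
  · rintro _ ⟨j, rfl⟩
    rcases min_choice (e j) (e' j) with h | h
    · exact Submodule.mem_sup_left (Submodule.subset_span ⟨j, by simp only [Pi.inf_apply, h]⟩)
    · exact Submodule.mem_sup_right (Submodule.subset_span ⟨j, by simp only [Pi.inf_apply, h]⟩)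

theorem inf_covBy_of_relLength_diagLattice_sup_eq_one [IsFractionRing O K] (hπ : π ≠ 0)
    (hπu : ¬IsUnit π) {e f : ι → ℤ}
    (h : relLength (diagLattice π b e) (diagLattice π b f ⊔ diagLattice π b e) = 1) :
    f ⊓ e ⋖ e := by
  rw [diagLattice_sup hπ hπu, relLength_eq_one_iff_covBy
    ((diagLattice_le_diagLattice_iff hπ hπu).2 inf_le_right)] at h
  exact toDual_covBy_toDual_iff.1 <| CovBy.of_image
    (OrderEmbedding.ofMapLEIff (fun e => diagLattice π b (OrderDual.ofDual e))
      fun _ _ => diagLattice_le_diagLattice_iff hπ hπu) h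

end DiagonalLattice

def latticeExponent {n : ℕ} (y : Fin n → ℚ) : Fin n ⊕ Fin n → ℤ :=
  Sum.elim (fun i => ⌈y i⌉) fun i => ⌈-y i⌉

omit [IsScalarTower O K V] in
theorem latticeOf_eq_diagLattice (π : O) {n : ℕ} (b : Module.Basis (Fin n ⊕ Fin n) K V)
    (y : Fin n → ℚ) : latticeOf π b y = diagLattice π b (latticeExponent y) := by
  rw [latticeOf, diagLattice, ← Set.Sum.elim_range]
  congr 2
  ext (i | i) <;> rfl

theorem ceil_intCast_div_two (m : ℤ) : ⌈(m : ℚ) / 2⌉ = (m + 1) / 2 := by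
  have h := Rat.ceil_intCast_div_natCast m 2
  push_cast at h
  rw [h]
  omega

theorem ceil_neg_intCast_div_two (m : ℤ) : ⌈-((m : ℚ) / 2)⌉ = (1 - m) / 2 := by
  rw [← neg_div, ← Int.cast_neg, ceil_intCast_div_two, neg_add_eq_sub]

theorem exists_intCast_eq_intCast_div_two_iff (m : ℤ) :
    (∃ z : ℤ, (m : ℚ) / 2 = z) ↔ Even m := by
  refine ⟨fun ⟨z, hz⟩ => ⟨z, ?_⟩, fun ⟨z, hz⟩ => ⟨z, ?_⟩⟩
  · have : (m : ℚ) = z + z := by linarith [div_mul_cancel₀ (m : ℚ) two_ne_zero]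
    exact_mod_cast this
  · rw [hz]
    push_cast
    ring

theorem exists_pivot_of_covBy {n s : ℕ} {m k : Fin n → ℤ}
    (hk : ∀ i, k i = if (i : ℕ) < s then 1 else 0)
    (hcov : latticeExponent (fun i => (m i : ℚ) / 2) ⊓ latticeExponent (fun i => (k i : ℚ) / 2) ⋖
      latticeExponent (fun i => (k i : ℚ) / 2)) :
    ∃ (i₀ : Fin n) (σ : ℤ), (σ = 1 ∨ σ = -1) ∧ (∀ i : Fin n, i ≠ i₀ → (i : ℕ) < s → m i = 1) ∧
      (∀ i : Fin n, i ≠ i₀ → s ≤ (i : ℕ) → -1 ≤ m i ∧ m i ≤ 1) ∧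
      (m i₀ = k i₀ + σ ∧ (i₀ : ℕ) < s ∨ m i₀ = k i₀ + 2 * σ ∨
        m i₀ = k i₀ + 3 * σ ∧ s ≤ (i₀ : ℕ)) := by
  obtain ⟨j₀, hdrop, hrest⟩ := Pi.covBy_iff.1 hcov
  rw [Order.covBy_iff_add_one_eq] at hdrop
  simp only [Pi.inf_apply, latticeExponent] at hdrop hrest
  have hother : ∀ i, Sum.inl i ≠ j₀ → Sum.inr i ≠ j₀ →
      ((i : ℕ) < s → m i = 1) ∧ (s ≤ (i : ℕ) → -1 ≤ m i ∧ m i ≤ 1) := by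
    intro i hl hr
    have h₁ := hrest _ hl
    have h₂ := hrest _ hr
    simp only [Sum.elim_inl, Sum.elim_inr, ceil_intCast_div_two, ceil_neg_intCast_div_two] at h₁ h₂
    have := hk i
    split_ifs at this <;> omega
  -- `σ = -1` when the exponent of `eᵢ₀` drops, `σ = 1` when that of `fᵢ₀` does.
  rcases j₀ with i₀ | i₀
  · refine ⟨i₀, -1, Or.inr rfl, fun i hi => (hother i (by simpa) (by simp)).1,
      fun i hi => (hother i (by simpa) (by simp)).2, ?_⟩
    have h₂ := hrest (Sum.inr i₀) (by simp)
    simp only [Sum.elim_inl, Sum.elim_inr, ceil_intCast_div_two, ceil_neg_intCast_div_two]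
      at hdrop h₂
    have := hk i₀
    split_ifs at this <;> omega
  · refine ⟨i₀, 1, Or.inl rfl, fun i hi => (hother i (by simp) (by simpa)).1,
      fun i hi => (hother i (by simp) (by simpa)).2, ?_⟩
    have h₁ := hrest (Sum.inl i₀) (by simp)
    simp only [Sum.elim_inl, Sum.elim_inr, ceil_intCast_div_two, ceil_neg_intCast_div_two]
      at hdrop h₁
    have := hk i₀
    split_ifs at this <;> omega

open Finset in
theorem card_filter_le_and_eq_ite {n s : ℕ} {p : Fin n → Prop} [DecidablePred p]
    (hp : #{i | p i} = s) {i₀ : Fin n} (hlt : ∀ i, i ≠ i₀ → (i : ℕ) < s → p i) :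
    #{i : Fin n | s ≤ (i : ℕ) ∧ p i} = if (i₀ : ℕ) < s ∧ ¬p i₀ then 1 else 0 := by
  have hsn : s ≤ n := hp ▸ (card_le_univ _).trans_eq (Fintype.card_fin n)
  have hswap : #{i : Fin n | s ≤ (i : ℕ) ∧ p i} =
      #(({i | (i : ℕ) < s} : Finset (Fin n)) \ ({i | p i} : Finset (Fin n))) := by
    rw [← card_sdiff_comm (s := {i | p i}) (t := {i : Fin n | (i : ℕ) < s})
      (by rw [hp, Fin.card_filter_val_lt, min_eq_right hsn])]
    congr 1
    ext i
    simp [and_comm]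
  rw [hswap]
  split_ifs with hpiv
  · refine card_eq_one.2 ⟨i₀, ?_⟩
    ext i
    simp only [mem_sdiff, mem_filter_univ, mem_singleton]
    refine ⟨fun ⟨his, hnp⟩ => ?_, fun h => h ▸ hpiv⟩
    by_contra h₀
    exact hnp (hlt i h₀ his)
  · refine card_eq_zero.2 (eq_empty_of_forall_notMem fun i => ?_)
    simp only [mem_sdiff, mem_filter_univ, not_and, not_not]
    intro his
    by_cases h₀ : i = i₀
    · exact not_not.1 fun hnp => hpiv (h₀ ▸ ⟨his, hnp⟩)
    · exact hlt i h₀ his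

open Finset in
theorem eq_add_single_of_covBy {n s : ℕ} {m k : Fin n → ℤ}
    (hk : ∀ i, k i = if (i : ℕ) < s then 1 else 0) (hodd : #{i | Odd (m i)} = s)
    (hcov : latticeExponent (fun i => (m i : ℚ) / 2) ⊓ latticeExponent (fun i => (k i : ℚ) / 2) ⋖
      latticeExponent (fun i => (k i : ℚ) / 2)) :
    (∃ i σ, (σ = 1 ∨ σ = -1) ∧ m = k + Pi.single i (2 * σ)) ∨
    (∃ j i : Fin n, (j : ℕ) < s ∧ s ≤ (i : ℕ) ∧ ∃ σ τ : ℤ, (σ = 1 ∨ σ = -1) ∧ (τ = 1 ∨ τ = -1) ∧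
      m = k + Pi.single j σ + Pi.single i τ) := by
  obtain ⟨i₀, σ, hσ, hlt, hge, hi₀⟩ := exists_pivot_of_covBy hk hcov
  simp only [Int.odd_iff] at hodd
  have hcard := card_filter_le_and_eq_ite hodd fun i h₀ his => by rw [hlt i h₀ his]; rfl
  have hrest (i : Fin n) (h₀ : i ≠ i₀) (heven : s ≤ (i : ℕ) → m i % 2 ≠ 1) : m i = k i := by
    have := hlt i h₀
    have := hge i h₀
    have := hk i
    split_ifs at this <;> omega
  by_cases hpiv : (i₀ : ℕ) < s ∧ m i₀ % 2 ≠ 1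
  · rw [if_pos hpiv] at hcard
    obtain ⟨i₁, hi₁⟩ := card_eq_one.1 hcard
    have hmem (i : Fin n) : s ≤ (i : ℕ) ∧ m i % 2 = 1 ↔ i = i₁ := by
      simpa using congr(i ∈ $hi₁)
    obtain ⟨hs₁, hodd₁⟩ := (hmem i₁).2 rfl
    have h₀₁ : i₁ ≠ i₀ := by rintro rfl; omega
    refine Or.inr ⟨i₀, i₁, hpiv.1, hs₁, σ, m i₁, hσ, by have := hge i₁ h₀₁ hs₁; omega, ?_⟩
    ext i
    rcases eq_or_ne i i₀ with rfl | h₀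
    · have := hk i
      simp only [Pi.add_apply, Pi.single_eq_same, Pi.single_eq_of_ne h₀₁.symm, add_zero]
      split_ifs at this <;> omega
    rcases eq_or_ne i i₁ with rfl | h₁
    · simp [Pi.single_eq_of_ne h₀, hk i, not_lt.2 hs₁]
    · simp [Pi.single_eq_of_ne h₀, Pi.single_eq_of_ne h₁,
        hrest i h₀ fun hi hodd => h₁ ((hmem i).1 ⟨hi, hodd⟩)]
  · have hhigh (i : Fin n) (hi : s ≤ (i : ℕ)) : m i % 2 ≠ 1 := by
      rw [if_neg hpiv, card_eq_zero] at hcard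
      simpa [hi] using congr(i ∈ $hcard)
    refine Or.inl ⟨i₀, σ, hσ, ?_⟩
    ext i
    rcases eq_or_ne i i₀ with rfl | h₀
    · have hki := hk i
      have := hhigh i
      simp only [Pi.add_apply, Pi.single_eq_same]
      split_ifs at hki <;> omega
    · simp [Pi.single_eq_of_ne h₀, hrest i h₀ (hhigh i)]

theorem intCast_div_two_add_single {n : ℕ} (k : Fin n → ℤ) (i : Fin n) (c : ℤ) :
    (fun j => ((k + Pi.single i c : Fin n → ℤ) j : ℚ) / 2) =
      (fun j => (k j : ℚ) / 2) + ((c : ℚ) / 2) • Pi.single i 1 := by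
  ext j
  rcases eq_or_ne j i with rfl | h
  · simp only [Pi.add_apply, Pi.single_eq_same, Pi.smul_apply, smul_eq_mul, mul_one]
    push_cast
    ring
  · simp [Pi.single_eq_of_ne h]

theorem statement15_general
    {O K V : Type*} [CommRing O]
    [Field K] [Algebra O K] [IsFractionRing O K]
    [AddCommGroup V] [Module K V] [Module O V] [IsScalarTower O K V]
    (π : O) (hπ : Irreducible π)
    (n : ℕ) (b : Module.Basis (Fin n ⊕ Fin n) K V)
    (s : ℕ)
    (y : Fin n → ℚ)
    (hy : ∀ i : Fin n, ∃ m : ℤ, y i = (m : ℚ) / 2)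
    (hcount : (Finset.univ.filter fun i : Fin n => ¬ ∃ m : ℤ, y i = (m : ℚ)).card = s)
    (x : Fin n → ℚ) (hx : x = fun i : Fin n => if (i : ℕ) < s then (1 / 2 : ℚ) else 0)
    (hlen : relLength (latticeOf π b x) (latticeOf π b y ⊔ latticeOf π b x) = 1) :
    (∃ i : Fin n, y = x + Pi.single i 1 ∨ y = x - Pi.single i 1) ∨
    (∃ j i : Fin n, (j : ℕ) < s ∧ s ≤ (i : ℕ) ∧
      ∃ εj εi : ℚ, (εj = 1 ∨ εj = -1) ∧ (εi = 1 ∨ εi = -1) ∧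
        y = x + (εj / 2) • Pi.single j 1 + (εi / 2) • Pi.single i 1) := by
  choose m hm using hy
  obtain rfl : y = fun i => (m i : ℚ) / 2 := funext hm
  obtain ⟨k, hk⟩ : ∃ k : Fin n → ℤ, ∀ i, k i = if (i : ℕ) < s then 1 else 0 := ⟨_, fun _ => rfl⟩
  obtain rfl : x = fun i => (k i : ℚ) / 2 := by
    rw [hx]
    ext i
    split_ifs with h <;> simp [hk, h]
  have hodd : (Finset.univ.filter fun i => Odd (m i)).card = s := by
    simpa only [exists_intCast_eq_intCast_div_two_iff, Int.not_even_iff_odd] using hcount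
  rw [latticeOf_eq_diagLattice, latticeOf_eq_diagLattice] at hlen
  rcases eq_add_single_of_covBy hk hodd
      (inf_covBy_of_relLength_diagLattice_sup_eq_one hπ.ne_zero hπ.not_isUnit hlen) with
    ⟨i, σ, hσ, hmk⟩ | ⟨j, i, hj, hi, σ, τ, hσ, hτ, hmk⟩
  · refine Or.inl ⟨i, ?_⟩
    rw [hmk, intCast_div_two_add_single]
    rcases hσ with rfl | rfl <;> norm_num [sub_eq_add_neg]
  · refine Or.inr ⟨j, i, hj, hi, σ, τ, by rcases hσ with rfl | rfl <;> norm_num,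
      by rcases hτ with rfl | rfl <;> norm_num, ?_⟩
    rw [hmk, intCast_div_two_add_single, intCast_div_two_add_single]

/-- if `(L(y) + L(x⁽ˢ⁾))/L(x⁽ˢ⁾)` has length `1`, then `y = x⁽ˢ⁾ ± εᵢ`, or
`y = x⁽ˢ⁾ ± ½εⱼ ± ½εᵢ` with `j` among the first `s` coordinates and `i` among the rest. -/
theorem statement15
    {O K V : Type*} [CommRing O] [IsDomain O] [IsDiscreteValuationRing O]
    [Field K] [Algebra O K] [IsFractionRing O K]
    [AddCommGroup V] [Module K V] [Module O V] [IsScalarTower O K V]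
    (π : O) (hπ : Irreducible π)
    (n : ℕ) (b : Module.Basis (Fin n ⊕ Fin n) K V)
    (s : ℕ) (hs : s ≤ n)
    (y : Fin n → ℚ)
    (hy : ∀ i : Fin n, ∃ m : ℤ, y i = (m : ℚ) / 2)
    (hcount : (Finset.univ.filter fun i : Fin n => ¬ ∃ m : ℤ, y i = (m : ℚ)).card = s)
    (x : Fin n → ℚ) (hx : x = fun i : Fin n => if (i : ℕ) < s then (1 / 2 : ℚ) else 0)
    (hlen : relLength (latticeOf π b x) (latticeOf π b y ⊔ latticeOf π b x) = 1) :
    (∃ i : Fin n, y = x + Pi.single i 1 ∨ y = x - Pi.single i 1) ∨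
    (∃ j i : Fin n, (j : ℕ) < s ∧ s ≤ (i : ℕ) ∧
      ∃ εj εi : ℚ, (εj = 1 ∨ εj = -1) ∧ (εi = 1 ∨ εi = -1) ∧
        y = x + (εj / 2) • Pi.single j 1 + (εi / 2) • Pi.single i 1) :=
  statement15_general π hπ n b s y hy hcount x hx hlen

end VertexLatticePosition
end
end

section
/- Let h ≥ 2 be even, r ≥ 1, and d ≥ h/2 + r. Let w ∈ S^B_d be the signed permutation determined by: w(1) = −1; w(i) = i for 2 ≤ i ≤ h/2; w(i) = i + 1 for h/2 + 1 ≤ i ≤ h/2 + r − 1; w(h/2 + r) = −(h/2 + 1); and w(i) = i for h/2 + r + 1 ≤ i ≤ d. Then inv_D(w) = h + r − 1. -/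
namespace SignedPerm

/-- The type-`D` inversion number of a signed permutation `w`, counted on the window
`{1, …, d}`: `#{(i,j) : i < j, w i > w j} + #{(i,j) : i < j, w (-i) > w j}`. -/
noncomputable def invD (d : ℕ) (w : ℤ → ℤ) : ℕ :=
  (((Finset.Icc (1 : ℤ) d) ×ˢ (Finset.Icc (1 : ℤ) d)).filter
      (fun q => q.1 < q.2 ∧ w q.2 < w q.1)).card +
  (((Finset.Icc (1 : ℤ) d) ×ˢ (Finset.Icc (1 : ℤ) d)).filter
      (fun q => q.1 < q.2 ∧ w q.2 < w (-q.1))).card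

/-
Away from the positions `1` and `e + r`, `w` moves every letter up by at most one, so these
two positions carry all inversions: the pairs `(i, e + r)` with `i < e + r` are the ordinary
inversions, and the pairs `(i, e + r)` with `i ≤ e` are those with `w i + w (e + r) < 0`.
Hence `inv_D w = (e + r - 1) + e = h + r - 1`.
-/

variable {e r d : ℕ} {w : ℤ → ℤ}

theorem le_apply_le_succ_of_ne
    (h2 : ∀ i : ℤ, 2 ≤ i → i ≤ (e : ℤ) → w i = i)
    (h3 : ∀ i : ℤ, (e : ℤ) + 1 ≤ i → i ≤ (e : ℤ) + r - 1 → w i = i + 1)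
    (h5 : ∀ i : ℤ, (e : ℤ) + r + 1 ≤ i → i ≤ (d : ℤ) → w i = i)
    {i : ℤ} (hi : 2 ≤ i) (hid : i ≤ d) (hne : i ≠ (e : ℤ) + r) :
    i ≤ w i ∧ w i ≤ i + 1 := by
  rcases le_or_gt i e with hie | hie
  · rw [h2 i hi hie]; omega
  rcases le_or_gt i ((e : ℤ) + r - 1) with hir | hir
  · rw [h3 i hie hir]; omega
  · rw [h5 i (by omega) hid]; omega

theorem filter_inversions_eq (he : 1 ≤ e) (hd : e + r ≤ d)
    (h1 : w 1 = -1) (h4 : w ((e : ℤ) + r) = -((e : ℤ) + 1))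
    (hnear : ∀ i : ℤ, 2 ≤ i → i ≤ d → i ≠ (e : ℤ) + r → i ≤ w i ∧ w i ≤ i + 1) :
    ((Finset.Icc (1 : ℤ) d ×ˢ Finset.Icc (1 : ℤ) d).filter
        (fun q => q.1 < q.2 ∧ w q.2 < w q.1)) =
      Finset.Icc (1 : ℤ) ((e : ℤ) + r - 1) ×ˢ {(e : ℤ) + r} := by
  ext ⟨i, j⟩
  simp only [Finset.mem_filter, Finset.mem_product, Finset.mem_Icc, Finset.mem_singleton]
  constructor
  · rintro ⟨⟨⟨hi1, hid⟩, -, hjd⟩, hij, hw⟩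
    by_cases hje : j = (e : ℤ) + r
    · exact ⟨⟨hi1, by omega⟩, hje⟩
    have hj := hnear j (by omega) hjd hje
    rcases hi1.eq_or_lt with rfl | hi1
    · omega
    by_cases hie : i = (e : ℤ) + r
    · subst hie; omega
    · have := hnear i hi1 hid hie; omega
  · rintro ⟨⟨hi1, hie⟩, rfl⟩
    refine ⟨⟨⟨hi1, by omega⟩, by omega, by omega⟩, by omega, ?_⟩
    rcases hi1.eq_or_lt with rfl | hi1
    · omega
    · have := hnear i hi1 (by omega) (by omega); omega

theorem filter_negInversions_eq (he : 1 ≤ e) (hr : 1 ≤ r) (hd : e + r ≤ d)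
    (hsym : ∀ i : ℤ, w (-i) = -w i) (h1 : w 1 = -1)
    (h2 : ∀ i : ℤ, 2 ≤ i → i ≤ (e : ℤ) → w i = i)
    (h4 : w ((e : ℤ) + r) = -((e : ℤ) + 1))
    (hnear : ∀ i : ℤ, 2 ≤ i → i ≤ d → i ≠ (e : ℤ) + r → i ≤ w i ∧ w i ≤ i + 1) :
    ((Finset.Icc (1 : ℤ) d ×ˢ Finset.Icc (1 : ℤ) d).filter
        (fun q => q.1 < q.2 ∧ w q.2 < w (-q.1))) =
      Finset.Icc (1 : ℤ) e ×ˢ {(e : ℤ) + r} := by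
  ext ⟨i, j⟩
  simp only [Finset.mem_filter, Finset.mem_product, Finset.mem_Icc, Finset.mem_singleton, hsym]
  constructor
  · rintro ⟨⟨⟨hi1, hid⟩, -, hjd⟩, hij, hw⟩
    by_cases hje : j = (e : ℤ) + r
    · refine ⟨⟨hi1, ?_⟩, hje⟩
      subst hje
      by_contra! hie
      have := hnear i (by omega) hid (by omega); omega
    have hj := hnear j (by omega) hjd hje
    rcases hi1.eq_or_lt with rfl | hi1
    · omega
    by_cases hie : i = (e : ℤ) + r
    · subst hie; omega
    · have := hnear i hi1 hid hie; omega
  · rintro ⟨⟨hi1, hie⟩, rfl⟩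
    refine ⟨⟨⟨hi1, by omega⟩, by omega, by omega⟩, by omega, ?_⟩
    rcases hi1.eq_or_lt with rfl | hi1
    · omega
    · rw [h2 i hi1 hie]; omega

/-- the length (inversion) computation for the Weyl group element `w_r`. -/
theorem statement17 (h e r d : ℕ) (he : h = 2 * e) (hh : 2 ≤ h) (hr : 1 ≤ r)
    (hd : e + r ≤ d)
    (w : ℤ → ℤ)
    (hsym : ∀ i : ℤ, w (-i) = -w i)
    (h1 : w 1 = -1)
    (h2 : ∀ i : ℤ, 2 ≤ i → i ≤ (e : ℤ) → w i = i)
    (h3 : ∀ i : ℤ, (e : ℤ) + 1 ≤ i → i ≤ (e : ℤ) + r - 1 → w i = i + 1)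
    (h4 : w ((e : ℤ) + r) = -((e : ℤ) + 1))
    (h5 : ∀ i : ℤ, (e : ℤ) + r + 1 ≤ i → i ≤ (d : ℤ) → w i = i) :
    invD d w = h + r - 1 := by
  have he1 : 1 ≤ e := by omega
  have hnear : ∀ i : ℤ, 2 ≤ i → i ≤ d → i ≠ (e : ℤ) + r → i ≤ w i ∧ w i ≤ i + 1 :=
    fun _ => le_apply_le_succ_of_ne h2 h3 h5
  rw [invD, filter_inversions_eq he1 hd h1 h4 hnear,
    filter_negInversions_eq he1 hr hd hsym h1 h2 h4 hnear, Finset.card_product,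
    Finset.card_product, Finset.card_singleton, Int.card_Icc, Int.card_Icc]
  omega

end SignedPerm
end
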